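/- Let n ≥ 5 and let a,b,c,d,e ∈ {1,…,n} be distinct. There exists a connected acyclic hypergraph with vertex set [n]^(2) (ordered pairs of distinct elements of {1,…,n}) such that one hyperedge is the 6-element set T(a,b,e) ∪ T(c,d,e), and all other hyperedges are triangles T(x,y,z) for triples (x,y,z) of distinct elements. -/

import Mathlib

/-- `PairsSet n` is `[n]^(2)`, the set of ordered pairs of distinct elements of `{1,…,n}`. -/
def PairsSet (n : ℕ) : Set (ℕ × ℕ) :=
  {p | p.1 ≠ p.2 ∧ 1 ≤ p.1 ∧ p.1 ≤ n ∧ 1 ≤ p.2 ∧ p.2 ≤ n}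

/-- The triangle `T(a,b,c) = {(a,b),(b,c),(c,a)}`. -/
def Tset (a b c : ℕ) : Set (ℕ × ℕ) := {(a, b), (b, c), (c, a)}

/-- `h` is a triangle `T(a,b,c)` for some triple of distinct elements of `{1,…,n}`. -/
def IsTriangle (n : ℕ) (h : Set (ℕ × ℕ)) : Prop :=
  ∃ a b c : ℕ, a ≠ b ∧ b ≠ c ∧ a ≠ c ∧ 1 ≤ a ∧ a ≤ n ∧ 1 ≤ b ∧ b ≤ n ∧ 1 ≤ c ∧ c ≤ n ∧
    h = Tset a b c

/-- The bipartite incidence graph of a hypergraph with vertex set `V` and hyperedge set `H`: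
vertices on one side, hyperedges on the other, adjacency given by membership. -/
def incGraph (V : Set (ℕ × ℕ)) (H : Set (Set (ℕ × ℕ))) : SimpleGraph (↥V ⊕ ↥H) where
  Adj x y :=
    (∃ v h, x = Sum.inl v ∧ y = Sum.inr h ∧ (v : ℕ × ℕ) ∈ (h : Set (ℕ × ℕ))) ∨
    (∃ v h, y = Sum.inl v ∧ x = Sum.inr h ∧ (v : ℕ × ℕ) ∈ (h : Set (ℕ × ℕ)))
  symm := by
    constructor
    rintro x y (⟨v, h, rfl, rfl, hm⟩ | ⟨v, h, rfl, rfl, hm⟩)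
    · exact Or.inr ⟨v, h, rfl, rfl, hm⟩
    · exact Or.inl ⟨v, h, rfl, rfl, hm⟩
  loopless := by constructor; rintro x (⟨v, h, rfl, hy, -⟩ | ⟨v, h, hy, rfl, -⟩) <;> simp at hy

/-!
Rank the pairs of `[n]^(2)` and give every pair `v` outside the six-edge `E₀` a parent
hyperedge `τ v ∋ v` containing exactly one pair of smaller rank (its anchor), all other
members `w` having the rank of `v` and `τ w = τ v`; the pairs of `E₀` get rank `0`. In the
incidence graph every node other than `E₀` then has exactly one neighbour closer to `E₀`
(a pair its parent hyperedge, a hyperedge its anchor), so the graph is connected, and the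
deepest node of a cycle would have two such neighbours, so it is acyclic.

The fourteen pairs of `{a,b,c,d,e}` outside `E₀` are covered by seven triangles hanging
from `E₀` (`SixEdge.coreParent`). Order the points with the core first and then the others
increasingly (`SixEdge.level`). For a later point `m` let `σ` be a cyclic permutation of the
points before `m`; they are at least five, so `σ` has no fixed point, and the triangles
`T(m, y, σ y)` cover every pair `(m, y)` and `(σ y, m)` exactly once, each hanging from the
earlier pair `(y, σ y)`.
-/

namespace SimpleGraph

variable {V : Type*} (G : SimpleGraph V) (depth : V → ℕ)

theorem isAcyclic_of_unique_lower_neighbor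
    (hne : ∀ ⦃v u⦄, G.Adj v u → depth v ≠ depth u)
    (huniq : ∀ ⦃v u w⦄, G.Adj v u → G.Adj v w → depth u < depth v → depth w < depth v → u = w) :
    G.IsAcyclic := by
  classical
  intro v c hc
  obtain ⟨u, hu, hmax⟩ := c.support.toFinset.exists_max_image depth ⟨v, by simp⟩
  rw [List.mem_toFinset] at hu
  set c' := c.rotate u hu
  have hc' : c'.IsCycle := hc.rotate hu
  have hlower : ∀ ⦃w⦄, w ∈ c'.support → G.Adj u w → depth w < depth u := fun w hw hadj =>
    lt_of_le_of_ne (hmax w (by simpa using (c.mem_support_rotate_iff u hu).mp hw))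
      (hne hadj).symm
  have hsnd := c'.adj_snd hc'.not_nil
  have hpen := (c'.adj_penultimate hc'.not_nil).symm
  exact hc'.snd_ne_penultimate <| huniq hsnd hpen (hlower (c'.getVert_mem_support _) hsnd)
    (hlower (c'.getVert_mem_support _) hpen)

theorem connected_of_forall_exists_lower_neighbor (root : V)
    (hroot : ∀ v, v ≠ root → ∃ u, G.Adj v u ∧ depth u < depth v) :
    G.Connected := by
  have hreach : ∀ v, G.Reachable v root := by
    intro v
    induction hd : depth v using Nat.strong_induction_on generalizing v with
    | _ k ih =>
      by_cases hv : v = root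
      · exact hv ▸ .rfl
      · obtain ⟨u, hadj, hlt⟩ := hroot v hv
        exact hadj.reachable.trans (ih _ (hd ▸ hlt) u rfl)
  exact (connected_iff _).mpr ⟨fun x y => (hreach x).trans (hreach y).symm, ⟨root⟩⟩

end SimpleGraph

section IncidenceGraph

variable {V : Set (ℕ × ℕ)} {H : Set (Set (ℕ × ℕ))}

@[simp]
theorem incGraph_adj_inl_inr {v : V} {h : H} :
    (incGraph V H).Adj (.inl v) (.inr h) ↔ (v : ℕ × ℕ) ∈ (h : Set (ℕ × ℕ)) := by
  refine ⟨?_, fun hvh => .inl ⟨v, h, rfl, rfl, hvh⟩⟩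
  rintro (⟨_, _, ⟨⟩, ⟨⟩, hvh⟩ | ⟨_, _, ⟨⟩, -⟩)
  exact hvh

@[simp]
theorem incGraph_adj_inr_inl {v : V} {h : H} :
    (incGraph V H).Adj (.inr h) (.inl v) ↔ (v : ℕ × ℕ) ∈ (h : Set (ℕ × ℕ)) :=
  (incGraph V H).adj_comm _ _ |>.trans incGraph_adj_inl_inr

@[simp]
theorem incGraph_not_adj_inl_inl {v w : V} : ¬ (incGraph V H).Adj (.inl v) (.inl w) := by
  simp [incGraph]

@[simp]
theorem incGraph_not_adj_inr_inr {h k : H} : ¬ (incGraph V H).Adj (.inr h) (.inr k) := by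
  simp [incGraph]

end IncidenceGraph

def IsParentEdge (V : Set (ℕ × ℕ)) (rank : ℕ × ℕ → ℕ) (τ : ℕ × ℕ → Set (ℕ × ℕ))
    (v : ℕ × ℕ) : Prop :=
  v ∈ τ v ∧ ∃ A ∈ τ v, A ∈ V ∧ rank A < rank v ∧ ∀ w ∈ τ v, w ≠ A → rank w = rank v ∧ τ w = τ v

section ParentEdges

variable {V E₀ : Set (ℕ × ℕ)} {rank : ℕ × ℕ → ℕ} {τ : ℕ × ℕ → Set (ℕ × ℕ)}

theorem sSup_rank_image_of_forall_eq_zero (hE₀ : ∀ u ∈ E₀, rank u = 0) :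
    sSup (rank '' E₀) = 0 :=
  Nat.eq_zero_of_le_zero <| csSup_le' <| by
    rintro _ ⟨u, hu, rfl⟩
    exact (hE₀ u hu).le

theorem IsParentEdge.sSup_rank_image {v : ℕ × ℕ} (hv : IsParentEdge V rank τ v) :
    sSup (rank '' τ v) = rank v := by
  obtain ⟨hvτ, A, hA, -, hAv, hτ⟩ := hv
  refine IsGreatest.csSup_eq ⟨⟨v, hvτ, rfl⟩, ?_⟩
  rintro _ ⟨w, hw, rfl⟩
  rcases eq_or_ne w A with rfl | hwA
  · exact hAv.le
  · exact (hτ w hw hwA).1.le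

variable (hE₀ : ∀ u ∈ E₀, rank u = 0) (hτ : ∀ v ∈ V \ E₀, IsParentEdge V rank τ v)
include hE₀ hτ

open Classical in
theorem eq_of_mem_of_sSup_rank_image_le {h : Set (ℕ × ℕ)} (hh : h ∈ insert E₀ (τ '' (V \ E₀)))
    {v : ℕ × ℕ} (hvh : v ∈ h) (hle : sSup (rank '' h) ≤ rank v) :
    h = if v ∈ E₀ then E₀ else τ v := by
  obtain rfl | ⟨u, hu, rfl⟩ := hh
  · simp [hvh]
  · rw [(hτ u hu).sSup_rank_image] at hle
    obtain ⟨-, A, -, -, hAu, hτu⟩ := hτ u hu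
    have hvA : v ≠ A := by rintro rfl; omega
    obtain ⟨hvu, hτv⟩ := hτu v hvh hvA
    have hvE₀ : v ∉ E₀ := fun hv => by rw [hE₀ v hv] at hvu; omega
    simp [hvE₀, hτv]

theorem eq_of_mem_of_rank_lt_sSup {h : Set (ℕ × ℕ)} (hh : h ∈ insert E₀ (τ '' (V \ E₀)))
    {v w : ℕ × ℕ} (hvh : v ∈ h) (hwh : w ∈ h) (hv : rank v < sSup (rank '' h))
    (hw : rank w < sSup (rank '' h)) : v = w := by
  obtain rfl | ⟨u, hu, rfl⟩ := hh
  · rw [sSup_rank_image_of_forall_eq_zero hE₀] at hv; omega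
  · rw [(hτ u hu).sSup_rank_image] at hv hw
    obtain ⟨-, A, -, -, -, hτu⟩ := hτ u hu
    have anchor : ∀ x ∈ τ u, rank x < rank u → x = A := fun x hx hlt =>
      by_contra fun hxA => hlt.ne (hτu x hx hxA).1
    rw [anchor v hvh hv, anchor w hwh hw]

theorem incGraph_isTree_of_isParentEdge :
    (incGraph V (insert E₀ (τ '' (V \ E₀)))).IsTree := by
  set H := insert E₀ (τ '' (V \ E₀))
  let depth : V ⊕ H → ℕ := Sum.elim (fun v => 2 * rank v + 1) (fun h => 2 * sSup (rank '' h))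
  have hne : ∀ ⦃x y⦄, (incGraph V H).Adj x y → depth x ≠ depth y := by
    rintro (v | h) (w | k) hadj <;> simp_all [depth] <;> omega
  refine ⟨SimpleGraph.connected_of_forall_exists_lower_neighbor _ depth
    (.inr ⟨E₀, Set.mem_insert _ _⟩) ?_,
    SimpleGraph.isAcyclic_of_unique_lower_neighbor _ depth hne ?_⟩
  · rintro (⟨v, hv⟩ | ⟨h, hh⟩) hx
    · by_cases hvE₀ : v ∈ E₀
      · exact ⟨.inr ⟨E₀, Set.mem_insert _ _⟩, by simpa using hvE₀,
          by simp [depth, sSup_rank_image_of_forall_eq_zero hE₀]⟩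
      · have hv' := hτ v ⟨hv, hvE₀⟩
        exact ⟨.inr ⟨τ v, Set.mem_insert_of_mem _ ⟨v, ⟨hv, hvE₀⟩, rfl⟩⟩, by simpa using hv'.1,
          by simp [depth, hv'.sSup_rank_image]⟩
    · obtain rfl | ⟨u, hu, rfl⟩ := hh
      · exact absurd rfl hx
      · obtain ⟨-, A, hA, hAV, hAu, -⟩ := hτ u hu
        exact ⟨.inl ⟨A, hAV⟩, by simpa using hA, by simp [depth, (hτ u hu).sSup_rank_image]; omega⟩
  · rintro (v | ⟨h, hh⟩) (u | ⟨k, hk⟩) (w | ⟨l, hl⟩) hu hw hdu hdw <;>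
      simp only [incGraph_adj_inl_inr, incGraph_adj_inr_inl, incGraph_not_adj_inl_inl,
        incGraph_not_adj_inr_inr] at hu hw
    all_goals simp only [depth, Sum.elim_inl, Sum.elim_inr] at hdu hdw
    · exact congrArg Sum.inr <| Subtype.ext <|
        (eq_of_mem_of_sSup_rank_image_le hE₀ hτ hk hu (by omega)).trans
          (eq_of_mem_of_sSup_rank_image_le hE₀ hτ hl hw (by omega)).symm
    · exact congrArg Sum.inl <| Subtype.ext <|
        eq_of_mem_of_rank_lt_sSup hE₀ hτ hh hu hw (by omega) (by omega)

end ParentEdges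

def IsAnchored (V : Set (ℕ × ℕ)) (rank : ℕ × ℕ → ℕ) (τ : ℕ × ℕ → Set (ℕ × ℕ))
    (h : Set (ℕ × ℕ)) (A : ℕ × ℕ) (r : ℕ) : Prop :=
  A ∈ h ∧ A ∈ V ∧ rank A < r ∧ ∀ w ∈ h, w ≠ A → rank w = r ∧ τ w = h

theorem IsAnchored.isParentEdge {V h : Set (ℕ × ℕ)} {rank : ℕ × ℕ → ℕ}
    {τ : ℕ × ℕ → Set (ℕ × ℕ)} {A v : ℕ × ℕ} {r : ℕ} (hh : IsAnchored V rank τ h A r)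
    (hvh : v ∈ h) (hvA : v ≠ A) : IsParentEdge V rank τ v := by
  obtain ⟨hAh, hAV, hAr, hmem⟩ := hh
  obtain ⟨hvr, hτv⟩ := hmem v hvh hvA
  refine ⟨hτv ▸ hvh, A, hτv ▸ hAh, hAV, hvr ▸ hAr, fun w hw hwA => ?_⟩
  rw [hτv] at hw ⊢
  rw [hvr]
  exact hmem w hw hwA

theorem isTriangle_Tset {n x y z : ℕ} (hxy : x ≠ y) (hyz : y ≠ z) (hxz : x ≠ z)
    (hx : 1 ≤ x ∧ x ≤ n) (hy : 1 ≤ y ∧ y ≤ n) (hz : 1 ≤ z ∧ z ≤ n) : IsTriangle n (Tset x y z) :=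
  ⟨x, y, z, hxy, hyz, hxz, hx.1, hx.2, hy.1, hy.2, hz.1, hz.2, rfl⟩

namespace SixEdge

variable (n a b c d e : ℕ)

def corePoints : Finset ℕ := {a, b, c, d, e}

def level (x : ℕ) : ℕ := if x ∈ corePoints a b c d e then 0 else x

def earlier (m : ℕ) : Set ℕ := {x | (1 ≤ x ∧ x ≤ n) ∧ level a b c d e x < level a b c d e m}

noncomputable def fanCycle (m : ℕ) : Equiv.Perm ℕ :=
  (Set.to_countable (earlier n a b c d e m)).exists_cycleOn.choose

noncomputable def fan (m y : ℕ) : Set (ℕ × ℕ) := Tset m y (fanCycle n a b c d e m y)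

/-- The parent triangle, its anchor and the rank of a core pair outside `E₀`; the pairs of `E₀`
fall through to `(E₀, _, 0)`. -/
def coreParent (v : ℕ × ℕ) : Set (ℕ × ℕ) × (ℕ × ℕ) × ℕ :=
  if v = (b, c) ∨ v = (c, a) then (Tset a b c, (a, b), 1)
  else if v = (b, d) ∨ v = (d, a) then (Tset a b d, (a, b), 1)
  else if v = (a, c) ∨ v = (c, e) then (Tset a c e, (e, a), 1)
  else if v = (c, b) ∨ v = (b, a) then (Tset a c b, (a, c), 2)
  else if v = (e, d) ∨ v = (d, c) then (Tset c e d, (c, e), 2)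
  else if v = (a, d) ∨ v = (d, b) then (Tset a d b, (b, a), 3)
  else if v = (a, e) ∨ v = (e, b) then (Tset a e b, (b, a), 3)
  else (Tset a b e ∪ Tset c d e, (a, b), 0)

noncomputable def parentEdge (v : ℕ × ℕ) : Set (ℕ × ℕ) :=
  if level a b c d e v.2 < level a b c d e v.1 then fan n a b c d e v.1 v.2
  else if level a b c d e v.1 < level a b c d e v.2 then
    fan n a b c d e v.2 ((fanCycle n a b c d e v.2)⁻¹ v.1)
  else (coreParent a b c d e v).1

def rank (v : ℕ × ℕ) : ℕ :=
  if level a b c d e v.1 = level a b c d e v.2 then (coreParent a b c d e v).2.2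
  else 4 + max (level a b c d e v.1) (level a b c d e v.2)

variable {n a b c d e}

theorem level_le (x : ℕ) : level a b c d e x ≤ x := by
  unfold level; split_ifs <;> omega

theorem level_of_mem {x : ℕ} (hx : x ∈ corePoints a b c d e) : level a b c d e x = 0 := if_pos hx

theorem coreParent_rank_le (v : ℕ × ℕ) : (coreParent a b c d e v).2.2 ≤ 3 := by
  unfold coreParent; split_ifs <;> simp

theorem rank_of_level_lt {p q : ℕ} (h : level a b c d e q < level a b c d e p) :
    rank a b c d e (p, q) = 4 + level a b c d e p := by
  simp only [rank]; rw [if_neg h.ne']; omega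

theorem rank_of_level_gt {p q : ℕ} (h : level a b c d e p < level a b c d e q) :
    rank a b c d e (p, q) = 4 + level a b c d e q := by
  simp only [rank]; rw [if_neg h.ne]; omega

theorem rank_lt_of_level_lt {p q k : ℕ} (hp : level a b c d e p < k) (hq : level a b c d e q < k) :
    rank a b c d e (p, q) < 4 + k := by
  simp only [rank]
  split_ifs
  · have : (coreParent a b c d e (p, q)).2.2 ≤ 3 := coreParent_rank_le _
    omega
  · omega

theorem parentEdge_of_level_lt {p q : ℕ} (h : level a b c d e q < level a b c d e p) :
    parentEdge n a b c d e (p, q) = fan n a b c d e p q := if_pos h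

theorem parentEdge_of_level_gt {p q : ℕ} (h : level a b c d e p < level a b c d e q) :
    parentEdge n a b c d e (p, q) = fan n a b c d e q ((fanCycle n a b c d e q)⁻¹ p) := by
  simp only [parentEdge]; rw [if_neg (lt_asymm h), if_pos h]

theorem parentEdge_of_level_eq {p q : ℕ} (h : level a b c d e p = level a b c d e q) :
    parentEdge n a b c d e (p, q) = (coreParent a b c d e (p, q)).1 := by
  simp only [parentEdge]; rw [if_neg h.symm.not_lt, if_neg h.not_lt]

theorem mem_corePoints_of_level_eq {p q : ℕ} (hp : 1 ≤ p) (hq : 1 ≤ q) (hpq : p ≠ q)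
    (h : level a b c d e p = level a b c d e q) :
    p ∈ corePoints a b c d e ∧ q ∈ corePoints a b c d e := by
  unfold level at h
  split_ifs at h with h₁ h₂ <;> first | exact ⟨h₁, h₂⟩ | omega

theorem rank_eq_zero_of_mem_root (hdist : [a, b, c, d, e].Nodup) :
    ∀ u ∈ Tset a b e ∪ Tset c d e, rank a b c d e u = 0 := by
  simp only [List.nodup_cons, List.mem_cons, List.not_mem_nil, or_false, not_or] at hdist
  obtain ⟨⟨hab, hac, had, hae⟩, ⟨hbc, hbd, hbe⟩, ⟨hcd, hce⟩, hde, -⟩ := hdist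
  rintro u (hu | hu) <;> simp only [Tset, Set.mem_insert_iff, Set.mem_singleton_iff] at hu <;>
    rcases hu with rfl | rfl | rfl <;>
    simp [rank, level, corePoints, coreParent, hab, Ne.symm hab, hac, Ne.symm hac, had, Ne.symm had,
      hae, Ne.symm hae, hbc, Ne.symm hbc, hbd, Ne.symm hbd, hbe, Ne.symm hbe, hcd, Ne.symm hcd,
      hce, Ne.symm hce, hde, Ne.symm hde]

theorem isAnchored_coreParent (hdist : [a, b, c, d, e].Nodup)
    (hcore : ∀ x ∈ corePoints a b c d e, 1 ≤ x ∧ x ≤ n) {v : ℕ × ℕ}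
    (hv : v.1 ∈ corePoints a b c d e ∧ v.2 ∈ corePoints a b c d e) (hv12 : v.1 ≠ v.2)
    (hvE₀ : v ∉ Tset a b e ∪ Tset c d e) :
    IsAnchored (PairsSet n) (rank a b c d e) (parentEdge n a b c d e) (coreParent a b c d e v).1
      (coreParent a b c d e v).2.1 (coreParent a b c d e v).2.2 ∧
    v ∈ (coreParent a b c d e v).1 ∧ v ≠ (coreParent a b c d e v).2.1 ∧
    IsTriangle n (coreParent a b c d e v).1 := by
  simp only [List.nodup_cons, List.mem_cons, List.not_mem_nil, or_false, not_or] at hdist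
  obtain ⟨⟨hab, hac, had, hae⟩, ⟨hbc, hbd, hbe⟩, ⟨hcd, hce⟩, hde, -⟩ := hdist
  obtain ⟨ha, ha'⟩ := hcore a (by simp [corePoints])
  obtain ⟨hb, hb'⟩ := hcore b (by simp [corePoints])
  obtain ⟨hc, hc'⟩ := hcore c (by simp [corePoints])
  obtain ⟨hd, hd'⟩ := hcore d (by simp [corePoints])
  obtain ⟨he, he'⟩ := hcore e (by simp [corePoints])
  obtain ⟨p, q⟩ := v
  simp only [corePoints, Finset.mem_insert, Finset.mem_singleton, @eq_comm _ p, @eq_comm _ q] at hv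
  rcases hv with ⟨rfl | rfl | rfl | rfl | rfl, rfl | rfl | rfl | rfl | rfl⟩
  all_goals first
    | exact absurd rfl hv12
    | (exfalso; apply hvE₀
       simp only [Tset, Set.mem_union, Set.mem_insert_iff, Set.mem_singleton_iff, true_or, or_true]
       done)
    | skip
  all_goals
    simp only [IsAnchored, coreParent, Tset, PairsSet, parentEdge, rank, level, corePoints,
      Set.mem_insert_iff, Set.mem_singleton_iff, Set.mem_ofPred_eq, Finset.mem_insert,
      Finset.mem_singleton, Prod.mk.injEq, hab, Ne.symm hab, hac, Ne.symm hac, had, Ne.symm had,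
      hae, Ne.symm hae, hbc, Ne.symm hbc, hbd, Ne.symm hbd, hbe, Ne.symm hbe, hcd, Ne.symm hcd,
      hce, Ne.symm hce, hde, Ne.symm hde, true_and, and_true, and_false, or_false,
      or_true, if_true, if_false, ne_eq, not_true_eq_false, not_false_eq_true,
      forall_eq_or_imp, forall_eq, false_implies, implies_true, Nat.reduceLT, lt_self_iff_false,
      and_self, ha, ha', hb, hb', hc, hc', he, he']
  all_goals
    apply isTriangle_Tset <;> first | exact ⟨‹_›, ‹_›⟩ | assumption | exact Ne.symm ‹_›

theorem fanCycle_isCycleOn (m : ℕ) : (fanCycle n a b c d e m).IsCycleOn (earlier n a b c d e m) :=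
  (Set.to_countable _).exists_cycleOn.choose_spec.1

section Fan

variable {m y : ℕ} (hy : y ∈ earlier n a b c d e m)
include hy

theorem earlier_nontrivial (hab : a ≠ b) (hcore : ∀ x ∈ corePoints a b c d e, 1 ≤ x ∧ x ≤ n) :
    (earlier n a b c d e m).Nontrivial := by
  have hm : 0 < level a b c d e m := lt_of_le_of_lt (Nat.zero_le _) hy.2
  refine ⟨a, ⟨hcore a (by simp [corePoints]), ?_⟩, b, ⟨hcore b (by simp [corePoints]), ?_⟩, hab⟩
  · rwa [level_of_mem (by simp [corePoints])]
  · rwa [level_of_mem (by simp [corePoints])]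

theorem fanCycle_apply_mem : fanCycle n a b c d e m y ∈ earlier n a b c d e m :=
  (fanCycle_isCycleOn m).apply_mem_iff.mpr hy

theorem isAnchored_fan (hab : a ≠ b) (hcore : ∀ x ∈ corePoints a b c d e, 1 ≤ x ∧ x ≤ n) :
    IsAnchored (PairsSet n) (rank a b c d e) (parentEdge n a b c d e) (fan n a b c d e m y)
      (y, fanCycle n a b c d e m y) (4 + level a b c d e m) := by
  set σ := fanCycle n a b c d e m
  have hσy : σ y ∈ earlier n a b c d e m := fanCycle_apply_mem hy
  have hne : σ y ≠ y := (fanCycle_isCycleOn m).apply_ne (earlier_nontrivial hy hab hcore) hy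
  refine ⟨Set.mem_insert_of_mem _ (Set.mem_insert _ _),
    ⟨hne.symm, hy.1.1, hy.1.2, hσy.1.1, hσy.1.2⟩, rank_lt_of_level_lt hy.2 hσy.2, ?_⟩
  intro w hw hwA
  simp only [fan, Tset, Set.mem_insert_iff, Set.mem_singleton_iff] at hw
  rcases hw with rfl | rfl | rfl
  · exact ⟨rank_of_level_lt hy.2, parentEdge_of_level_lt hy.2⟩
  · exact absurd rfl hwA
  · refine ⟨rank_of_level_gt hσy.2, ?_⟩
    rw [parentEdge_of_level_gt hσy.2, Equiv.Perm.coe_inv, Equiv.symm_apply_apply]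

theorem isTriangle_fan (hab : a ≠ b) (hcore : ∀ x ∈ corePoints a b c d e, 1 ≤ x ∧ x ≤ n)
    (hm : m ≤ n) : IsTriangle n (fan n a b c d e m y) := by
  have hσy : fanCycle n a b c d e m y ∈ earlier n a b c d e m := fanCycle_apply_mem hy
  have hne := (fanCycle_isCycleOn m).apply_ne (earlier_nontrivial hy hab hcore) hy
  have hm1 : level a b c d e m ≤ m := level_le m
  have hmy : m ≠ y := by rintro rfl; exact lt_irrefl _ hy.2
  have hmσy : m ≠ fanCycle n a b c d e m y := by rintro h; rw [← h] at hσy; exact lt_irrefl _ hσy.2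
  exact isTriangle_Tset hmy (Ne.symm hne) hmσy ⟨by have := hy.2; omega, hm⟩ hy.1 hσy.1

end Fan

theorem isParentEdge_and_isTriangle (hdist : [a, b, c, d, e].Nodup)
    (hcore : ∀ x ∈ corePoints a b c d e, 1 ≤ x ∧ x ≤ n) {v : ℕ × ℕ}
    (hv : v ∈ PairsSet n \ (Tset a b e ∪ Tset c d e)) :
    IsParentEdge (PairsSet n) (rank a b c d e) (parentEdge n a b c d e) v ∧
      IsTriangle n (parentEdge n a b c d e v) := by
  obtain ⟨p, q⟩ := v
  obtain ⟨⟨hpq, hp1, hpn, hq1, hqn⟩, hvE₀⟩ := hv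
  have hab : a ≠ b := fun h => (List.nodup_cons.mp hdist).1 (by simp [h])
  rcases lt_trichotomy (level a b c d e q) (level a b c d e p) with h | h | h
  · have hq : q ∈ earlier n a b c d e p := ⟨⟨hq1, hqn⟩, h⟩
    refine ⟨(isAnchored_fan hq hab hcore).isParentEdge (Set.mem_insert _ _) ?_, ?_⟩
    · exact fun h => hpq (Prod.ext_iff.mp h).1
    · rw [parentEdge_of_level_lt h]; exact isTriangle_fan hq hab hcore hpn
  · obtain ⟨hp, hq⟩ := mem_corePoints_of_level_eq hp1 hq1 hpq h.symm
    obtain ⟨hA, hvh, hvA, htri⟩ := isAnchored_coreParent hdist hcore ⟨hp, hq⟩ hpq hvE₀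
    rw [parentEdge_of_level_eq h.symm]
    exact ⟨hA.isParentEdge hvh hvA, htri⟩
  · have hy : (fanCycle n a b c d e q)⁻¹ p ∈ earlier n a b c d e q :=
      (fanCycle_isCycleOn q).inv.apply_mem_iff.mpr ⟨⟨hp1, hpn⟩, h⟩
    have hσy : fanCycle n a b c d e q ((fanCycle n a b c d e q)⁻¹ p) = p :=
      Equiv.apply_symm_apply _ p
    have hvfan : (p, q) ∈ fan n a b c d e q ((fanCycle n a b c d e q)⁻¹ p) := by
      simp only [fan, Tset, hσy, Set.mem_insert_iff, Set.mem_singleton_iff, or_true]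
    refine ⟨(isAnchored_fan hy hab hcore).isParentEdge hvfan ?_, ?_⟩
    · rw [hσy]; exact fun h => hpq (Prod.ext_iff.mp h).2.symm
    · rw [parentEdge_of_level_gt h]; exact isTriangle_fan hy hab hcore hqn

end SixEdge

theorem exists_hypergraph_with_six_edge_general (n : ℕ) (a b c d e : ℕ)
    (ha : 1 ≤ a) (ha' : a ≤ n) (hb : 1 ≤ b) (hb' : b ≤ n) (hc : 1 ≤ c) (hc' : c ≤ n)
    (hd : 1 ≤ d) (hd' : d ≤ n) (he : 1 ≤ e) (he' : e ≤ n)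
    (hdist : [a, b, c, d, e].Pairwise (· ≠ ·)) :
    ∃ H : Set (Set (ℕ × ℕ)),
      (Tset a b e ∪ Tset c d e) ∈ H ∧
      (∀ h ∈ H, h ≠ Tset a b e ∪ Tset c d e → IsTriangle n h) ∧
      (incGraph (PairsSet n) H).IsAcyclic ∧
      (incGraph (PairsSet n) H).Connected := by
  have hcore : ∀ x ∈ SixEdge.corePoints a b c d e, 1 ≤ x ∧ x ≤ n := by
    simp only [SixEdge.corePoints, Finset.mem_insert, Finset.mem_singleton]
    rintro x (rfl | rfl | rfl | rfl | rfl) <;> constructor <;> assumption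
  have hparent := fun v (hv : v ∈ PairsSet n \ (Tset a b e ∪ Tset c d e)) =>
    SixEdge.isParentEdge_and_isTriangle hdist hcore hv
  have htree := incGraph_isTree_of_isParentEdge (SixEdge.rank_eq_zero_of_mem_root hdist)
    fun v hv => (hparent v hv).1
  refine ⟨_, Set.mem_insert _ _, ?_, htree.isAcyclic, htree.connected⟩
  rintro h (rfl | ⟨v, hv, rfl⟩) hne
  · exact absurd rfl hne
  · exact (hparent v hv).2

/-- For `n ≥ 5` and distinct `a,b,c,d,e ∈ {1,…,n}`, there is a connected acyclic
hypergraph with vertex set `[n]^(2)` one of whose hyperedges is the 6-element set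
`T(a,b,e) ∪ T(c,d,e)`, all other hyperedges being triangles. -/
theorem exists_hypergraph_with_six_edge (n : ℕ) (h5 : 5 ≤ n) (a b c d e : ℕ)
    (ha : 1 ≤ a) (ha' : a ≤ n) (hb : 1 ≤ b) (hb' : b ≤ n) (hc : 1 ≤ c) (hc' : c ≤ n)
    (hd : 1 ≤ d) (hd' : d ≤ n) (he : 1 ≤ e) (he' : e ≤ n)
    (hdist : [a, b, c, d, e].Pairwise (· ≠ ·)) :
    ∃ H : Set (Set (ℕ × ℕ)),
      (Tset a b e ∪ Tset c d e) ∈ H ∧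
      (∀ h ∈ H, h ≠ Tset a b e ∪ Tset c d e → IsTriangle n h) ∧
      (incGraph (PairsSet n) H).IsAcyclic ∧
      (incGraph (PairsSet n) H).Connected :=
  exists_hypergraph_with_six_edge_general n a b c d e ha ha' hb hb' hc hc' hd hd' he he' hdist
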